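/- arXiv:1506.00981 — 2 statements merged into one kernel-verified Lean document; each statement's English description precedes it below -/
import Mathlib

section
/- Let ρ be a density matrix, σ a positive semidefinite matrix with supp(ρ) ⊆ supp(σ). Then lim_{α→∞} D̃_α(ρ‖σ) = D_max(ρ‖σ) := log ‖σ^{−1/2} ρ σ^{−1/2}‖_∞, where D̃_α is the sandwiched Rényi relative entropy and σ^{−1/2} is the inverse on the support of σ. -/
/-!
Write `X = σ^{-1/2} ρ σ^{-1/2}` and `Q_α = σ^{(1-α)/(2α)} ρ σ^{(1-α)/(2α)}`. By the
C*-identity, `‖s ρ s‖ = ‖√ρ s² √ρ‖` for self-adjoint `s`, so `‖Q_α‖ = ‖√ρ σ^{1/α-1} √ρ‖` and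
`‖X‖ = ‖√ρ σ^{-1} √ρ‖`. If the nonzero eigenvalues of `σ` lie in `[a, b]` with `a > 0`,
then `a^{1/α} σ^{-1} ≤ σ^{1/α-1} ≤ b^{1/α} σ^{-1}` in the Loewner order (all three vanish off
the support of `σ`), hence `a^{1/α} ‖X‖ ≤ ‖Q_α‖ ≤ b^{1/α} ‖X‖`. Since `‖Q‖^α ≤ Tr Q^α ≤ d ‖Q‖^α`
in dimension `d`, `Tr Q_α^α` lies between `a ‖X‖^α` and `d b ‖X‖^α`, and `(α-1)⁻¹ log` of both
bounds tends to `log ‖X‖`.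
-/

open Matrix
open scoped Kronecker ComplexOrder

/-- Power of a Hermitian matrix taken on its support (eigenvalue `0 ↦ 0`). -/
noncomputable def mpow {n : Type*} [Fintype n] [DecidableEq n] (A : Matrix n n ℂ) (r : ℝ) :
    Matrix n n ℂ :=
  if h : A.IsHermitian then
    (h.eigenvectorUnitary : Matrix n n ℂ) *
      Matrix.diagonal (fun i =>
        (Complex.ofReal (if h.eigenvalues i = 0 then (0 : ℝ) else h.eigenvalues i ^ r))) *
      (star h.eigenvectorUnitary : Matrix n n ℂ)
  else 0

/-- Logarithm of a Hermitian matrix taken on its support. -/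
noncomputable def mlog {n : Type*} [Fintype n] [DecidableEq n] (A : Matrix n n ℂ) :
    Matrix n n ℂ :=
  if h : A.IsHermitian then
    (h.eigenvectorUnitary : Matrix n n ℂ) *
      Matrix.diagonal (fun i => (Complex.ofReal (Real.log (h.eigenvalues i)))) *
      (star h.eigenvectorUnitary : Matrix n n ℂ)
  else 0

/-- Schatten `p`-norm `(Tr |M|^p)^(1/p)`, using `|M|^p = (Mᴴ M)^(p/2)`. -/
noncomputable def schattenNorm {m n : Type*} [Fintype m] [Fintype n] [DecidableEq n]
    (p : ℝ) (M : Matrix m n ℂ) : ℝ :=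
  (Matrix.trace (mpow (Mᴴ * M) (p / 2))).re ^ (1 / p)

/-- Operator (spectral) norm: largest singular value. -/
noncomputable def opNorm {m n : Type*} [Fintype m] [Fintype n] [DecidableEq n]
    (M : Matrix m n ℂ) : ℝ :=
  ⨆ i, Real.sqrt ((Matrix.isHermitian_conjTranspose_mul_self M).eigenvalues i)

/-- Partial trace over the second (environment) tensor factor. -/
noncomputable def ptraceE {B E : Type*} [Fintype E] (M : Matrix (B × E) (B × E) ℂ) :
    Matrix B B ℂ :=
  Matrix.of fun i j => ∑ e, M (i, e) (j, e)

open scoped Matrix.Norms.L2Operator MatrixOrder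

section CStarAlgebra

variable {A : Type*} [CStarAlgebra A] [PartialOrder A] [StarOrderedRing A]

lemma IsSelfAdjoint.norm_conjugate_eq_norm_sqrt_conjugate {a s : A} (hs : IsSelfAdjoint s)
    (ha : 0 ≤ a) : ‖s * a * s‖ = ‖CFC.sqrt a * (s * s) * CFC.sqrt a‖ := by
  have hsqrt : IsSelfAdjoint (CFC.sqrt a) := (CFC.sqrt_nonneg a).isSelfAdjoint
  have h1 : s * a * s = (s * CFC.sqrt a) * star (s * CFC.sqrt a) := by
    rw [star_mul, hs.star_eq, hsqrt.star_eq, mul_assoc s (CFC.sqrt a),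
      ← mul_assoc (CFC.sqrt a), CFC.sqrt_mul_sqrt_self a ha, mul_assoc]
  have h2 : CFC.sqrt a * (s * s) * CFC.sqrt a = star (s * CFC.sqrt a) * (s * CFC.sqrt a) := by
    rw [star_mul, hs.star_eq, hsqrt.star_eq]
    noncomm_ring
  rw [h1, h2, CStarRing.norm_self_mul_star, CStarRing.norm_star_mul_self]

lemma IsSelfAdjoint.norm_conjugate_le_norm_conjugate {c y z : A} (hc : IsSelfAdjoint c)
    (hy : 0 ≤ y) (h : y ≤ z) : ‖c * y * c‖ ≤ ‖c * z * c‖ :=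
  CStarAlgebra.norm_le_norm_of_nonneg_of_le (hc.conjugate_nonneg hy) (hc.conjugate_le_conjugate h)

end CStarAlgebra

noncomputable def supportRpow (r x : ℝ) : ℝ := if x = 0 then 0 else x ^ r

lemma supportRpow_nonneg (r : ℝ) {x : ℝ} (hx : 0 ≤ x) : 0 ≤ supportRpow r x := by
  unfold supportRpow; split_ifs
  exacts [le_rfl, Real.rpow_nonneg hx r]

lemma supportRpow_mul_supportRpow (r s : ℝ) {x : ℝ} (hx : 0 ≤ x) :
    supportRpow r x * supportRpow s x = supportRpow (r + s) x := by
  unfold supportRpow; split_ifs with h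
  · exact zero_mul 0
  · exact (Real.rpow_add (hx.lt_of_ne' h) r s).symm

lemma supportRpow_le_rpow {p b x : ℝ} (hp : 0 ≤ p) (hx : 0 ≤ x) (hxb : x ≤ b) :
    supportRpow p x ≤ b ^ p := by
  unfold supportRpow; split_ifs
  exacts [Real.rpow_nonneg (hx.trans hxb) p, Real.rpow_le_rpow hx hxb hp]

lemma rpow_mul_supportRpow_neg_one_le {a t x : ℝ} (ha : 0 ≤ a) (ht : 0 ≤ t) (hx : 0 ≤ x)
    (hax : x ≠ 0 → a ≤ x) : a ^ t * supportRpow (-1) x ≤ supportRpow (t - 1) x := by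
  unfold supportRpow; split_ifs with h
  · simp
  · rw [Real.rpow_sub_one h, Real.rpow_neg_one, div_eq_mul_inv]
    exact mul_le_mul_of_nonneg_right (Real.rpow_le_rpow ha (hax h) ht) (inv_nonneg.2 hx)

lemma supportRpow_le_rpow_mul_supportRpow_neg_one {b t x : ℝ} (ht : 0 ≤ t) (hx : 0 ≤ x)
    (hxb : x ≠ 0 → x ≤ b) : supportRpow (t - 1) x ≤ b ^ t * supportRpow (-1) x := by
  unfold supportRpow; split_ifs with h
  · simp
  · rw [Real.rpow_sub_one h, Real.rpow_neg_one, div_eq_mul_inv]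
    exact mul_le_mul_of_nonneg_right (Real.rpow_le_rpow hx (hxb h) ht) (inv_nonneg.2 hx)

section Matrix

variable {n : Type*} [Fintype n] [DecidableEq n]

lemma Matrix.continuousOn_real_spectrum (f : ℝ → ℝ) (A : Matrix n n ℂ) :
    ContinuousOn f (spectrum ℝ A) :=
  Matrix.finite_real_spectrum.continuousOn f

lemma mpow_eq_cfc (A : Matrix n n ℂ) (r : ℝ) : mpow A r = cfc (supportRpow r) A := by
  by_cases hA : A.IsHermitian
  · rw [mpow, dif_pos hA, hA.cfc_eq, Matrix.IsHermitian.cfc, Unitary.conjStarAlgAut_apply]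
    rfl
  · rw [mpow, dif_neg hA]
    exact (cfc_apply_of_not_predicate A hA).symm

lemma isSelfAdjoint_mpow (A : Matrix n n ℂ) (r : ℝ) : IsSelfAdjoint (mpow A r) := by
  rw [mpow_eq_cfc]; exact cfc_predicate _ A

lemma mpow_nonneg {A : Matrix n n ℂ} (hA : A.PosSemidef) (r : ℝ) : 0 ≤ mpow A r := by
  rw [mpow_eq_cfc]
  exact cfc_nonneg fun x hx => supportRpow_nonneg r (spectrum_nonneg_of_nonneg hA.nonneg hx)

lemma mpow_mul_mpow {A : Matrix n n ℂ} (hA : A.PosSemidef) (r s : ℝ) :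
    mpow A r * mpow A s = mpow A (r + s) := by
  simp only [mpow_eq_cfc]
  rw [← cfc_mul _ _ A (Matrix.continuousOn_real_spectrum _ A)
    (Matrix.continuousOn_real_spectrum _ A)]
  exact cfc_congr fun x hx =>
    supportRpow_mul_supportRpow r s (spectrum_nonneg_of_nonneg hA.nonneg hx)

lemma trace_mpow {A : Matrix n n ℂ} (hA : A.IsHermitian) (r : ℝ) :
    (mpow A r).trace = ∑ i, (supportRpow r (hA.eigenvalues i) : ℂ) := by
  rw [mpow, dif_pos hA, Matrix.trace_mul_cycle, Unitary.coe_star_mul_self, one_mul,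
    Matrix.trace_diagonal]
  rfl

lemma Matrix.PosSemidef.eigenvalues_le_norm {A : Matrix n n ℂ} (hA : A.PosSemidef) (i : n) :
    hA.1.eigenvalues i ≤ ‖A‖ := by
  have h := (CStarAlgebra.norm_le_iff_le_algebraMap A (norm_nonneg A) hA.nonneg).1 le_rfl
  exact (le_algebraMap_iff_spectrum_le hA.1.isSelfAdjoint).1 h _
    (hA.1.eigenvalues_mem_spectrum_real i)

lemma Matrix.PosSemidef.exists_eigenvalues_eq_norm [Nonempty n] {A : Matrix n n ℂ}
    (hA : A.PosSemidef) : ∃ i, hA.1.eigenvalues i = ‖A‖ := by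
  rw [← Set.mem_range, ← hA.1.spectrum_real_eq_range_eigenvalues]
  exact CStarAlgebra.norm_mem_spectrum_of_nonneg hA.nonneg

lemma opNorm_eq_norm (M : Matrix n n ℂ) : opNorm M = ‖M‖ := by
  rcases isEmpty_or_nonempty n with hn | hn
  · simp [opNorm, Subsingleton.elim M 0]
  have hMM := Matrix.posSemidef_conjTranspose_mul_self M
  have hnorm : ‖Mᴴ * M‖ = ‖M‖ ^ 2 := by
    rw [sq, ← CStarRing.norm_star_mul_self, Matrix.star_eq_conjTranspose]
  refine le_antisymm (ciSup_le fun i => ?_) ?_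
  · calc √(hMM.1.eigenvalues i) ≤ √(‖M‖ ^ 2) :=
          Real.sqrt_le_sqrt (hnorm ▸ hMM.eigenvalues_le_norm i)
      _ = ‖M‖ := Real.sqrt_sq (norm_nonneg M)
  · obtain ⟨i, hi⟩ := hMM.exists_eigenvalues_eq_norm
    calc ‖M‖ = √(hMM.1.eigenvalues i) := by rw [hi, hnorm, Real.sqrt_sq (norm_nonneg M)]
      _ ≤ opNorm M :=
          le_ciSup (f := fun j => √(hMM.1.eigenvalues j)) (Set.finite_range _).bddAbove i

lemma norm_rpow_le_re_trace_mpow {A : Matrix n n ℂ} (hA : A.PosSemidef) {p : ℝ} (hp : 0 < p) :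
    ‖A‖ ^ p ≤ (mpow A p).trace.re := by
  rcases isEmpty_or_nonempty n with hn | hn
  · simp [Subsingleton.elim A 0, Real.zero_rpow hp.ne']
  obtain ⟨i, hi⟩ := hA.exists_eigenvalues_eq_norm
  rw [trace_mpow hA.1, ← Complex.ofReal_sum, Complex.ofReal_re]
  calc ‖A‖ ^ p ≤ supportRpow p (hA.1.eigenvalues i) := by
        rcases (norm_nonneg A).eq_or_lt with h | h
        · rw [← h, Real.zero_rpow hp.ne']
          exact supportRpow_nonneg p (hA.eigenvalues_nonneg i)
        · rw [supportRpow, if_neg (hi ▸ h.ne'), hi]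
    _ ≤ ∑ j, supportRpow p (hA.1.eigenvalues j) :=
        Finset.single_le_sum (fun j _ => supportRpow_nonneg p (hA.eigenvalues_nonneg j))
          (Finset.mem_univ i)

lemma re_trace_mpow_le_card_mul_norm_rpow {A : Matrix n n ℂ} (hA : A.PosSemidef) {p : ℝ}
    (hp : 0 ≤ p) : (mpow A p).trace.re ≤ Fintype.card n * ‖A‖ ^ p := by
  rw [trace_mpow hA.1, ← Complex.ofReal_sum, Complex.ofReal_re, ← nsmul_eq_mul,
    ← Finset.card_univ, ← Finset.sum_const]
  exact Finset.sum_le_sum fun i _ =>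
    supportRpow_le_rpow hp (hA.eigenvalues_nonneg i) (hA.eigenvalues_le_norm i)

lemma smul_mpow_neg_one_le_mpow_sub_one {σ : Matrix n n ℂ} (hσ : σ.PosSemidef) {a t : ℝ}
    (ha : 0 ≤ a) (ht : 0 ≤ t) (hspec : ∀ x ∈ spectrum ℝ σ, x ≠ 0 → a ≤ x) :
    a ^ t • mpow σ (-1) ≤ mpow σ (t - 1) := by
  simp only [mpow_eq_cfc]
  rw [← cfc_const_mul _ _ _ (Matrix.continuousOn_real_spectrum _ σ)]
  exact cfc_mono (fun x hx => rpow_mul_supportRpow_neg_one_le ha ht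
    (spectrum_nonneg_of_nonneg hσ.nonneg hx) (hspec x hx))
    (Matrix.continuousOn_real_spectrum _ σ) (Matrix.continuousOn_real_spectrum _ σ)

lemma mpow_sub_one_le_smul_mpow_neg_one {σ : Matrix n n ℂ} (hσ : σ.PosSemidef) {b t : ℝ}
    (ht : 0 ≤ t) (hspec : ∀ x ∈ spectrum ℝ σ, x ≠ 0 → x ≤ b) :
    mpow σ (t - 1) ≤ b ^ t • mpow σ (-1) := by
  simp only [mpow_eq_cfc]
  rw [← cfc_const_mul _ _ _ (Matrix.continuousOn_real_spectrum _ σ)]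
  exact cfc_mono (fun x hx => supportRpow_le_rpow_mul_supportRpow_neg_one ht
    (spectrum_nonneg_of_nonneg hσ.nonneg hx) (hspec x hx))
    (Matrix.continuousOn_real_spectrum _ σ) (Matrix.continuousOn_real_spectrum _ σ)

lemma norm_mpow_mul_mul_mpow_eq {ρ σ : Matrix n n ℂ} (hρ : ρ.PosSemidef) (hσ : σ.PosSemidef)
    (r : ℝ) : ‖mpow σ r * ρ * mpow σ r‖ = ‖CFC.sqrt ρ * mpow σ (2 * r) * CFC.sqrt ρ‖ := by
  rw [(isSelfAdjoint_mpow σ r).norm_conjugate_eq_norm_sqrt_conjugate hρ.nonneg, mpow_mul_mpow hσ,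
    two_mul]

lemma rpow_mul_norm_le_norm_mpow_mul_mul_mpow {ρ σ : Matrix n n ℂ} (hρ : ρ.PosSemidef)
    (hσ : σ.PosSemidef) {a t : ℝ} (ha : 0 ≤ a) (ht : 0 ≤ t)
    (hspec : ∀ x ∈ spectrum ℝ σ, x ≠ 0 → a ≤ x) :
    a ^ t * ‖mpow σ (-(1 / 2)) * ρ * mpow σ (-(1 / 2))‖
      ≤ ‖mpow σ ((t - 1) / 2) * ρ * mpow σ ((t - 1) / 2)‖ := by
  rw [norm_mpow_mul_mul_mpow_eq hρ hσ, norm_mpow_mul_mul_mpow_eq hρ hσ,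
    show 2 * -(1 / 2 : ℝ) = -1 by norm_num, mul_div_cancel₀ _ two_ne_zero]
  calc a ^ t * ‖CFC.sqrt ρ * mpow σ (-1) * CFC.sqrt ρ‖
      = ‖CFC.sqrt ρ * (a ^ t • mpow σ (-1)) * CFC.sqrt ρ‖ := by
        rw [mul_smul_comm, smul_mul_assoc, norm_smul, Real.norm_of_nonneg (Real.rpow_nonneg ha t)]
    _ ≤ ‖CFC.sqrt ρ * mpow σ (t - 1) * CFC.sqrt ρ‖ :=
        (CFC.sqrt_nonneg ρ).isSelfAdjoint.norm_conjugate_le_norm_conjugate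
          (smul_nonneg (Real.rpow_nonneg ha t) (mpow_nonneg hσ _))
          (smul_mpow_neg_one_le_mpow_sub_one hσ ha ht hspec)

lemma norm_mpow_mul_mul_mpow_le_rpow_mul {ρ σ : Matrix n n ℂ} (hρ : ρ.PosSemidef)
    (hσ : σ.PosSemidef) {b t : ℝ} (hb : 0 ≤ b) (ht : 0 ≤ t)
    (hspec : ∀ x ∈ spectrum ℝ σ, x ≠ 0 → x ≤ b) :
    ‖mpow σ ((t - 1) / 2) * ρ * mpow σ ((t - 1) / 2)‖
      ≤ b ^ t * ‖mpow σ (-(1 / 2)) * ρ * mpow σ (-(1 / 2))‖ := by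
  rw [norm_mpow_mul_mul_mpow_eq hρ hσ, norm_mpow_mul_mul_mpow_eq hρ hσ,
    show 2 * -(1 / 2 : ℝ) = -1 by norm_num, mul_div_cancel₀ _ two_ne_zero]
  calc ‖CFC.sqrt ρ * mpow σ (t - 1) * CFC.sqrt ρ‖
      ≤ ‖CFC.sqrt ρ * (b ^ t • mpow σ (-1)) * CFC.sqrt ρ‖ :=
        (CFC.sqrt_nonneg ρ).isSelfAdjoint.norm_conjugate_le_norm_conjugate (mpow_nonneg hσ _)
          (mpow_sub_one_le_smul_mpow_neg_one hσ ht hspec)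
    _ = b ^ t * ‖CFC.sqrt ρ * mpow σ (-1) * CFC.sqrt ρ‖ := by
        rw [mul_smul_comm, smul_mul_assoc, norm_smul, Real.norm_of_nonneg (Real.rpow_nonneg hb t)]

lemma Matrix.PosSemidef.exists_bounds_of_mem_spectrum {σ : Matrix n n ℂ} (hσ : σ.PosSemidef) :
    ∃ a b : ℝ, 0 < a ∧ 0 < b ∧ ∀ x ∈ spectrum ℝ σ, x ≠ 0 → a ≤ x ∧ x ≤ b := by
  have hS : (insert 1 (spectrum ℝ σ \ {0})).Finite :=
    (Matrix.finite_real_spectrum.sdiff).insert 1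
  have hpos : ∀ x ∈ insert 1 (spectrum ℝ σ \ {0}), 0 < x := by
    rintro x (rfl | ⟨hx, hx0⟩)
    exacts [one_pos, (spectrum_nonneg_of_nonneg hσ.nonneg hx).lt_of_ne' hx0]
  obtain ⟨a, ha, hamin⟩ := Set.exists_min_image _ id hS (Set.insert_nonempty _ _)
  obtain ⟨b, hb, hbmax⟩ := Set.exists_max_image _ id hS (Set.insert_nonempty _ _)
  exact ⟨a, b, hpos a ha, hpos b hb, fun x hx hx0 =>
    ⟨hamin x (Set.mem_insert_of_mem _ ⟨hx, hx0⟩), hbmax x (Set.mem_insert_of_mem _ ⟨hx, hx0⟩)⟩⟩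

end Matrix

open Filter Topology

lemma tendsto_inv_sub_one_mul_add_mul (C L : ℝ) :
    Tendsto (fun α : ℝ => (α - 1)⁻¹ * (C + α * L)) atTop (𝓝 L) := by
  have hsub : Tendsto (fun α : ℝ => α - 1) atTop atTop :=
    tendsto_atTop_add_const_right _ (-1) tendsto_id
  have h : Tendsto (fun α : ℝ => L + (α - 1)⁻¹ * (C + L)) atTop (𝓝 L) := by
    simpa using (hsub.inv_tendsto_atTop.mul_const (C + L)).const_add L
  refine h.congr' ?_
  filter_upwards [eventually_gt_atTop 1] with α hα
  field_simp [(sub_pos.2 hα).ne']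
  ring

lemma tendsto_inv_sub_one_mul_log_of_le_of_le {f : ℝ → ℝ} {a B L : ℝ} (ha : 0 < a) (hL : 0 ≤ L)
    (hf : ∀ᶠ α in atTop, a * L ^ α ≤ f α ∧ f α ≤ B * L ^ α) :
    Tendsto (fun α => (α - 1)⁻¹ * Real.log (f α)) atTop (𝓝 (Real.log L)) := by
  rcases hL.eq_or_lt with rfl | hL
  · -- `f = 0` eventually, and both sides are `0` because `Real.log 0 = 0`.
    refine tendsto_const_nhds.congr' ?_
    filter_upwards [hf, eventually_gt_atTop 0] with α hfα hα
    rw [Real.zero_rpow hα.ne', mul_zero, mul_zero] at hfα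
    rw [le_antisymm hfα.2 hfα.1, Real.log_zero, mul_zero]
  have hlog : ∀ᶠ α in atTop, (α - 1)⁻¹ * (Real.log a + α * Real.log L)
      ≤ (α - 1)⁻¹ * Real.log (f α) ∧
      (α - 1)⁻¹ * Real.log (f α) ≤ (α - 1)⁻¹ * (Real.log B + α * Real.log L) := by
    filter_upwards [hf, eventually_gt_atTop 1] with α hfα hα
    have hLα : 0 < L ^ α := Real.rpow_pos_of_pos hL α
    have hlower : 0 < a * L ^ α := mul_pos ha hLα
    have hB : 0 < B := pos_of_mul_pos_left (hlower.trans_le (hfα.1.trans hfα.2)) hLα.le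
    have hinv : 0 ≤ (α - 1)⁻¹ := inv_nonneg.2 (sub_pos.2 hα).le
    constructor <;> refine mul_le_mul_of_nonneg_left ?_ hinv
    · calc Real.log a + α * Real.log L = Real.log (a * L ^ α) := by
            rw [Real.log_mul ha.ne' hLα.ne', Real.log_rpow hL]
        _ ≤ Real.log (f α) := Real.log_le_log hlower hfα.1
    · calc Real.log (f α) ≤ Real.log (B * L ^ α) := Real.log_le_log (hlower.trans_le hfα.1) hfα.2
        _ = Real.log B + α * Real.log L := by rw [Real.log_mul hB.ne' hLα.ne', Real.log_rpow hL]
  exact tendsto_of_tendsto_of_tendsto_of_le_of_le' (tendsto_inv_sub_one_mul_add_mul _ _)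
    (tendsto_inv_sub_one_mul_add_mul _ _) (hlog.mono fun _ h => h.1) (hlog.mono fun _ h => h.2)

theorem stmt_8_general {n : Type*} [Fintype n] [DecidableEq n] (ρ σ : Matrix n n ℂ)
    (hρ : ρ.PosSemidef) (hσ : σ.PosSemidef) :
    Filter.Tendsto (fun α : ℝ => (α - 1)⁻¹ *
        Real.log (Matrix.trace (mpow (mpow σ ((1 - α) / (2 * α)) * ρ *
          mpow σ ((1 - α) / (2 * α))) α)).re)
      Filter.atTop
      (nhds (Real.log (opNorm (mpow σ (-(1 / 2)) * ρ * mpow σ (-(1 / 2)))))) := by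
  obtain ⟨a, b, ha, hb, hspec⟩ := hσ.exists_bounds_of_mem_spectrum
  rw [opNorm_eq_norm]
  refine tendsto_inv_sub_one_mul_log_of_le_of_le (B := Fintype.card n * b) ha (norm_nonneg _) ?_
  filter_upwards [eventually_gt_atTop 0] with α hα
  set X := mpow σ (-(1 / 2)) * ρ * mpow σ (-(1 / 2))
  have hexp : (1 - α) / (2 * α) = (α⁻¹ - 1) / 2 := by field_simp
  rw [hexp]
  set Q := mpow σ ((α⁻¹ - 1) / 2) * ρ * mpow σ ((α⁻¹ - 1) / 2)
  have hQ : Q.PosSemidef := (isSelfAdjoint_mpow σ _).conjugate_nonneg hρ.nonneg |>.posSemidef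
  have hlower := rpow_mul_norm_le_norm_mpow_mul_mul_mpow hρ hσ ha.le (inv_nonneg.2 hα.le)
    fun x hx hx0 => (hspec x hx hx0).1
  have hupper := norm_mpow_mul_mul_mpow_le_rpow_mul hρ hσ hb.le (inv_nonneg.2 hα.le)
    fun x hx hx0 => (hspec x hx hx0).2
  constructor
  · calc a * ‖X‖ ^ α = (a ^ α⁻¹ * ‖X‖) ^ α := by
          rw [Real.mul_rpow (Real.rpow_nonneg ha.le _) (norm_nonneg X),
            Real.rpow_inv_rpow ha.le hα.ne']
      _ ≤ ‖Q‖ ^ α :=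
          Real.rpow_le_rpow (mul_nonneg (Real.rpow_nonneg ha.le _) (norm_nonneg X)) hlower hα.le
      _ ≤ (mpow Q α).trace.re := norm_rpow_le_re_trace_mpow hQ hα
  · calc (mpow Q α).trace.re ≤ Fintype.card n * ‖Q‖ ^ α :=
          re_trace_mpow_le_card_mul_norm_rpow hQ hα.le
      _ ≤ Fintype.card n * (b ^ α⁻¹ * ‖X‖) ^ α :=
          mul_le_mul_of_nonneg_left (Real.rpow_le_rpow (norm_nonneg Q) hupper hα.le)
            (Nat.cast_nonneg _)
      _ = Fintype.card n * b * ‖X‖ ^ α := by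
          rw [Real.mul_rpow (Real.rpow_nonneg hb.le _) (norm_nonneg X),
            Real.rpow_inv_rpow hb.le hα.ne', mul_assoc]

/-- the sandwiched Rényi relative entropy converges to the max-relative entropy
as α → ∞. -/
theorem stmt_8 {n : Type*} [Fintype n] [DecidableEq n] (ρ σ : Matrix n n ℂ)
    (hρ : ρ.PosSemidef) (hρ1 : ρ.trace = 1) (hσ : σ.PosSemidef)
    (hsupp : ∀ v, σ.mulVec v = 0 → ρ.mulVec v = 0) :
    Filter.Tendsto (fun α : ℝ => (α - 1)⁻¹ *
        Real.log (Matrix.trace (mpow (mpow σ ((1 - α) / (2 * α)) * ρ *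
          mpow σ ((1 - α) / (2 * α))) α)).re)
      Filter.atTop
      (nhds (Real.log (opNorm (mpow σ (-(1 / 2)) * ρ * mpow σ (-(1 / 2)))))) :=
  stmt_8_general ρ σ hρ hσ
end

section
/- Let ρ be a density matrix, σ positive semidefinite with supp(ρ) ⊆ supp(σ), and N(X) = Tr_E(U X U†) a channel via isometry U. For any unitary V commuting with N(σ), ‖(N(ρ)^{1/2} V N(σ)^{−1/2} ⊗ I_E) U σ^{1/2}‖₂² = 1. -/
/-!
Write `T = N(σ)`, `R = N(ρ)`, `X = R^{1/2} V T^{-1/2}` and `M = (X ⊗ 1) U σ^{1/2}`. The squared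
2-norm is `Tr (M Mᴴ)`; there the two factors `σ^{1/2}` recombine to `σ`, and duality of the partial
trace turns it into `Tr (Xᴴ X T) = Tr (R^{1/2} V (T^{-1/2} T T^{-1/2}) Vᴴ R^{1/2})`. The middle
factor is the support projection `Π_T = T^0`, which commutes with `V` because `T` does, so the trace
is `Tr (R Π_T) = Tr R = Tr ρ = 1`. The identity `R Π_T = R` needs `ker T ⊆ ker R`; it follows from
`ker σ ⊆ ker ρ` through the Kraus form `N(X) = ∑ₑ Kₑ X Kₑᴴ`, `Kₑ = (1 ⊗ ⟨e|) U`, since a sum of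
positive semidefinite terms annihilates a vector only if every term does.
-/

open Matrix
open scoped Kronecker ComplexOrder

section Mpow

variable {n : Type*} [Fintype n] [DecidableEq n] {A : Matrix n n ℂ}

lemma mpow_eq_cfc_s16 (hA : A.IsHermitian) (r : ℝ) :
    mpow A r = cfc (fun x : ℝ => if x = 0 then 0 else x ^ r) A := by
  rw [hA.cfc_eq, IsHermitian.cfc, mpow, dif_pos hA]
  rfl

lemma mpow_one (hA : A.IsHermitian) : mpow A 1 = A := by
  rw [mpow_eq_cfc_s16 hA]
  exact (cfc_congr fun x _ => by split_ifs with hx <;> simp [hx]).trans (cfc_id' ℝ A)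

lemma isHermitian_mpow (A : Matrix n n ℂ) (r : ℝ) : (mpow A r).IsHermitian := by
  by_cases hA : A.IsHermitian
  · rw [mpow_eq_cfc_s16 hA]
    exact cfc_predicate _ A
  · rw [mpow, dif_neg hA]
    exact isHermitian_zero

lemma mpow_add (hA : A.PosSemidef) (r s : ℝ) : mpow A (r + s) = mpow A r * mpow A s := by
  simp only [mpow_eq_cfc_s16 hA.isHermitian]
  rw [← cfc_mul _ _ A (A.finite_real_spectrum.continuousOn _)
    (A.finite_real_spectrum.continuousOn _)]
  refine cfc_congr fun x hx => ?_
  have hx : 0 ≤ x := by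
    rw [hA.isHermitian.spectrum_real_eq_range_eigenvalues] at hx
    obtain ⟨i, rfl⟩ := hx
    exact hA.eigenvalues_nonneg i
  rcases hx.eq_or_lt with rfl | hx
  · simp
  · simp [hx.ne', Real.rpow_add hx]

lemma Commute.mpow_right {X : Matrix n n ℂ} (hA : A.IsHermitian) (h : Commute X A) (r : ℝ) :
    Commute X (mpow A r) := by
  rw [mpow_eq_cfc_s16 hA]
  exact (h.symm.cfc_real _).symm

lemma mul_mpow_zero_of_ker_le {T R : Matrix n n ℂ} (hT : T.PosSemidef)
    (hker : ∀ v, T *ᵥ v = 0 → R *ᵥ v = 0) : R * mpow T 0 = R := by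
  have hTP : T * mpow T 0 = T := by
    calc T * mpow T 0 = mpow T 1 * mpow T 0 := by rw [mpow_one hT.isHermitian]
      _ = T := by rw [← mpow_add hT, add_zero, mpow_one hT.isHermitian]
  refine ext_iff_mulVec.mpr fun v => ?_
  have hv : T *ᵥ (v - mpow T 0 *ᵥ v) = 0 := by
    rw [mulVec_sub, mulVec_mulVec, hTP, sub_self]
  rw [← mulVec_mulVec, ← sub_eq_zero, ← mulVec_sub, ← neg_sub, mulVec_neg, hker _ hv, neg_zero]

end Mpow

section Kraus

variable {m n ι : Type*} [Fintype n] [Fintype ι]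

lemma Matrix.PosSemidef.mulVec_eq_zero_of_sum_mulVec_eq_zero {A : ι → Matrix n n ℂ}
    (hA : ∀ i, (A i).PosSemidef) {w : n → ℂ} (hw : (∑ i, A i) *ᵥ w = 0) (i : ι) :
    A i *ᵥ w = 0 := by
  have hsum : ∑ i, star w ⬝ᵥ A i *ᵥ w = 0 := by
    rw [← dotProduct_sum, ← sum_mulVec, hw, dotProduct_zero]
  rw [← (hA i).dotProduct_mulVec_zero_iff]
  exact (Finset.sum_eq_zero_iff_of_nonneg fun j _ => (hA j).dotProduct_mulVec_nonneg w).mp hsum i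
    (Finset.mem_univ i)

lemma Matrix.PosSemidef.mulVec_conjTranspose_eq_zero [Fintype m] {σ : Matrix n n ℂ}
    (hσ : σ.PosSemidef) (K : Matrix m n ℂ) {w : m → ℂ} (hw : (K * σ * Kᴴ) *ᵥ w = 0) :
    σ *ᵥ (Kᴴ *ᵥ w) = 0 := by
  rw [← hσ.dotProduct_mulVec_zero_iff, star_mulVec, conjTranspose_conjTranspose,
    ← dotProduct_mulVec, mulVec_mulVec, mulVec_mulVec, hw, dotProduct_zero]

lemma mulVec_kraus_eq_zero_of_ker_le [Fintype m] (K : ι → Matrix m n ℂ) {σ ρ : Matrix n n ℂ}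
    (hσ : σ.PosSemidef) (hker : ∀ v, σ *ᵥ v = 0 → ρ *ᵥ v = 0) {w : m → ℂ}
    (hw : (∑ i, K i * σ * (K i)ᴴ) *ᵥ w = 0) : (∑ i, K i * ρ * (K i)ᴴ) *ᵥ w = 0 := by
  have hterm := PosSemidef.mulVec_eq_zero_of_sum_mulVec_eq_zero
    (fun i => hσ.mul_mul_conjTranspose_same (K i)) hw
  rw [sum_mulVec]
  refine Finset.sum_eq_zero fun i _ => ?_
  rw [← mulVec_mulVec, ← mulVec_mulVec,
    hker _ (hσ.mulVec_conjTranspose_eq_zero (K i) (hterm i)), mulVec_zero]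

end Kraus

section PartialTrace

variable {n B E : Type*} [Fintype n] [Fintype E]

def krausOp (U : Matrix (B × E) n ℂ) (e : E) : Matrix B n ℂ :=
  U.submatrix (·, e) id

lemma ptraceE_mul_mul_conjTranspose (U : Matrix (B × E) n ℂ) (X : Matrix n n ℂ) :
    ptraceE (U * X * Uᴴ) = ∑ e, krausOp U e * X * (krausOp U e)ᴴ := by
  ext i j
  simp [ptraceE, krausOp, mul_apply, Matrix.sum_apply]

variable [Fintype B]

lemma posSemidef_ptraceE_mul_mul_conjTranspose {X : Matrix n n ℂ} (hX : X.PosSemidef)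
    (U : Matrix (B × E) n ℂ) : (ptraceE (U * X * Uᴴ)).PosSemidef := by
  rw [ptraceE_mul_mul_conjTranspose]
  exact posSemidef_sum _ fun e _ => hX.mul_mul_conjTranspose_same _

lemma ptraceE_mul_mul_conjTranspose_mulVec_eq_zero {σ ρ : Matrix n n ℂ} (hσ : σ.PosSemidef)
    (hker : ∀ v, σ *ᵥ v = 0 → ρ *ᵥ v = 0) (U : Matrix (B × E) n ℂ) {w : B → ℂ}
    (hw : ptraceE (U * σ * Uᴴ) *ᵥ w = 0) : ptraceE (U * ρ * Uᴴ) *ᵥ w = 0 := by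
  rw [ptraceE_mul_mul_conjTranspose] at hw ⊢
  exact mulVec_kraus_eq_zero_of_ker_le _ hσ hker hw

variable [DecidableEq E]

lemma trace_kronecker_one_mul (X : Matrix B B ℂ) (M : Matrix (B × E) (B × E) ℂ) :
    trace ((X ⊗ₖ (1 : Matrix E E ℂ)) * M) = trace (X * ptraceE M) := by
  simp only [trace, diag_apply, mul_apply, kroneckerMap_apply, one_apply, mul_ite, mul_one,
    mul_zero, ite_mul, zero_mul, Fintype.sum_prod_type, Finset.sum_ite_eq, Finset.mem_univ,
    ↓reduceIte, ptraceE, of_apply, Finset.mul_sum]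
  exact Finset.sum_congr rfl fun _ _ => Finset.sum_comm

lemma trace_ptraceE [DecidableEq B] (M : Matrix (B × E) (B × E) ℂ) :
    trace (ptraceE M) = trace M := by
  simpa using (trace_kronecker_one_mul (E := E) 1 M).symm

end PartialTrace

lemma trace_conjTranspose_mul_self_kronecker_one_mul {n n' B E : Type*} [Fintype n] [Fintype n']
    [Fintype B] [Fintype E] [DecidableEq E] (X : Matrix B B ℂ) (U : Matrix (B × E) n ℂ)
    (S : Matrix n n' ℂ) :
    trace (((X ⊗ₖ (1 : Matrix E E ℂ)) * U * S)ᴴ * ((X ⊗ₖ (1 : Matrix E E ℂ)) * U * S)) =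
      trace (Xᴴ * X * ptraceE (U * (S * Sᴴ) * Uᴴ)) := by
  have hconj : ((X ⊗ₖ (1 : Matrix E E ℂ)) * U * S) * ((X ⊗ₖ (1 : Matrix E E ℂ)) * U * S)ᴴ =
      (X ⊗ₖ (1 : Matrix E E ℂ)) * (U * (S * Sᴴ) * Uᴴ) * (Xᴴ ⊗ₖ (1 : Matrix E E ℂ)) := by
    simp only [conjTranspose_mul, conjTranspose_kronecker, conjTranspose_one, Matrix.mul_assoc]
  rw [trace_mul_comm, hconj, trace_mul_cycle, ← mul_kronecker_mul, mul_one,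
    trace_kronecker_one_mul]

lemma trace_mpow_half_mul_unitary_mul_mpow_neg_half {B : Type*} [Fintype B] [DecidableEq B]
    {T R V : Matrix B B ℂ} (hT : T.PosSemidef) (hR : R.PosSemidef)
    (hker : ∀ v, T *ᵥ v = 0 → R *ᵥ v = 0) (hV : V ∈ unitaryGroup B ℂ) (hVT : Commute V T) :
    trace ((mpow R (1 / 2) * V * mpow T (-(1 / 2)))ᴴ * (mpow R (1 / 2) * V * mpow T (-(1 / 2))) *
      T) = trace R := by
  set r := mpow R (1 / 2)
  set t := mpow T (-(1 / 2))
  have hr : rᴴ = r := (isHermitian_mpow R _).eq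
  have ht : tᴴ = t := (isHermitian_mpow T _).eq
  have hrr : r * r = R := by
    rw [← mpow_add hR, add_halves, mpow_one hR.isHermitian]
  have htTt : t * T * t = mpow T 0 := by
    conv_lhs => rw [← mpow_one hT.isHermitian]
    rw [← mpow_add hT, ← mpow_add hT]
    norm_num
  have hVP : V * mpow T 0 * Vᴴ = mpow T 0 := by
    rw [(hVT.mpow_right hT.isHermitian 0).eq, mul_assoc, ← star_eq_conjTranspose,
      mem_unitaryGroup_iff.mp hV, mul_one]
  calc trace ((r * V * t)ᴴ * (r * V * t) * T)
      = trace (r * (V * (t * T * t) * Vᴴ) * r) := by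
        rw [trace_mul_cycle, ← trace_mul_comm]
        simp only [conjTranspose_mul, hr, ht, mul_assoc]
    _ = trace (R * mpow T 0) := by
        rw [htTt, hVP, trace_mul_comm, ← mul_assoc, hrr]
    _ = trace R := by rw [mul_mpow_zero_of_ker_le hT hker]

lemma sq_schattenNorm_two {m n : Type*} [Fintype m] [Fintype n] [DecidableEq n]
    (M : Matrix m n ℂ) : schattenNorm 2 M ^ 2 = (trace (Mᴴ * M)).re := by
  have hnonneg : 0 ≤ (trace (Mᴴ * M)).re :=
    (Complex.nonneg_iff.mp (posSemidef_conjTranspose_mul_self M).trace_nonneg).1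
  rw [schattenNorm, div_self two_ne_zero, mpow_one (isHermitian_conjTranspose_mul_self M),
    ← Real.rpow_natCast, ← Real.rpow_mul hnonneg]
  norm_num

/-- for any unitary `V` commuting with `N(σ)`,
`‖(N(ρ)^{1/2} V N(σ)^{-1/2} ⊗ I_E) U σ^{1/2}‖₂² = 1`, where `N(X) = Tr_E (U X Uᴴ)`. -/
theorem stmt_16 {n B E : Type*} [Fintype n] [DecidableEq n] [Fintype B] [DecidableEq B]
    [Fintype E] [DecidableEq E]
    (ρ σ : Matrix n n ℂ) (hρ : ρ.PosSemidef) (hρ1 : ρ.trace = 1) (hσ : σ.PosSemidef)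
    (hsupp : ∀ v, σ.mulVec v = 0 → ρ.mulVec v = 0)
    (U : Matrix (B × E) n ℂ) (hU : Uᴴ * U = 1)
    (V : Matrix B B ℂ) (hV : V ∈ Matrix.unitaryGroup B ℂ)
    (hVc : V * ptraceE (U * σ * Uᴴ) = ptraceE (U * σ * Uᴴ) * V) :
    (schattenNorm 2
        (((mpow (ptraceE (U * ρ * Uᴴ)) (1 / 2) * V *
            mpow (ptraceE (U * σ * Uᴴ)) (-(1 / 2))) ⊗ₖ (1 : Matrix E E ℂ)) *
          U * mpow σ (1 / 2))) ^ 2 = 1 := by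
  have hsqrt : mpow σ (1 / 2) * (mpow σ (1 / 2))ᴴ = σ := by
    rw [(isHermitian_mpow σ _).eq, ← mpow_add hσ, add_halves, mpow_one hσ.isHermitian]
  have htrace : trace (ptraceE (U * ρ * Uᴴ)) = 1 := by
    rw [trace_ptraceE, trace_mul_cycle, hU, one_mul, hρ1]
  rw [sq_schattenNorm_two, trace_conjTranspose_mul_self_kronecker_one_mul, hsqrt,
    trace_mpow_half_mul_unitary_mul_mpow_neg_half
      (posSemidef_ptraceE_mul_mul_conjTranspose hσ U)
      (posSemidef_ptraceE_mul_mul_conjTranspose hρ U)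
      (fun _ => ptraceE_mul_mul_conjTranspose_mulVec_eq_zero hσ hsupp U) hV hVc,
    htrace, Complex.one_re]
end
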